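/- Let m, n ≥ 1, 1 ≤ k ≤ min(m,n), let (p̃,q̃) ∈ 𝒫ᵏ_{m,n}, let ε > 0, and let (p,q) ∈ 𝒞_{m,n} with ‖(p−p̃, q−q̃)‖ < ε. Let K = ker S_k(p̃,q̃) (which is the one-dimensional span of (w̃, ṽ) where ṽ, w̃ are the cofactors of (p̃,q̃)), let P denote the orthogonal projection of V_k onto K, and let σ₂ := min{ ‖S_k(p̃,q̃)x‖ : x ∈ V_k, ‖x‖ = 1, x ⟂ K }. Then σ₂ > 0, and every unit vector y ∈ V_k minimizing ‖S_k(p,q)(·)‖ over unit vectors of V_k satisfies ‖y − P(y)‖ < 2ε·√(max(m,n) − k + 1) / σ₂. -/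

import Mathlib

open Polynomial

/-- The squared ℓ²-norm of the coefficient sequence of a polynomial. -/
noncomputable def pnormSq (p : ℂ[X]) : ℝ := ∑ i ∈ p.support, ‖p.coeff i‖ ^ 2

/-- The ℓ²-norm of the coefficient sequence of a polynomial. -/
noncomputable def pnorm (p : ℂ[X]) : ℝ := Real.sqrt (pnormSq p)

/-- The ℓ²-norm of a pair of polynomials. -/
noncomputable def pairNorm (p q : ℂ[X]) : ℝ := Real.sqrt (pnormSq p + pnormSq q)

/-- The ℓ²-norm of a triple of polynomials. -/
noncomputable def tripleNorm (p q r : ℂ[X]) : ℝ :=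
  Real.sqrt (pnormSq p + pnormSq q + pnormSq r)

/-- The degree of the greatest common divisor of two polynomials. -/
noncomputable def gcdDeg (p q : ℂ[X]) : ℕ := (EuclideanDomain.gcd p q).natDegree

/-- The set 𝒞_{m,n} of pairs of polynomials of degrees exactly m and n. -/
def Cmn (m n : ℕ) : Set (ℂ[X] × ℂ[X]) :=
  {pq | pq.1.degree = (m : WithBot ℕ) ∧ pq.2.degree = (n : WithBot ℕ)}

/-- The GCD manifold 𝒫ᵏ_{m,n} : pairs in 𝒞_{m,n} whose GCD has degree k. -/
def Pmnk (m n k : ℕ) : Set (ℂ[X] × ℂ[X]) :=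
  {pq | pq ∈ Cmn m n ∧ gcdDeg pq.1 pq.2 = k}

/-- The distance θ_k(p,q) from (p,q) to the GCD manifold 𝒫ᵏ_{m,n}. -/
noncomputable def theta (m n k : ℕ) (p q : ℂ[X]) : ℝ :=
  sInf ((fun rs => pairNorm (p - rs.1) (q - rs.2)) '' Pmnk m n k)

/-- The bilinear Sylvester expression (w,v) ↦ p·w − q·v as a linear map. -/
noncomputable def sylMap (p q : ℂ[X]) : ℂ[X] × ℂ[X] →ₗ[ℂ] ℂ[X] :=
  (LinearMap.mulLeft ℂ p).comp (LinearMap.fst ℂ ℂ[X] ℂ[X]) -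
    (LinearMap.mulLeft ℂ q).comp (LinearMap.snd ℂ ℂ[X] ℂ[X])

/-- The domain V_j = {(w,v) : deg w ≤ n−j, deg v ≤ m−j} of the j-th Sylvester map. -/
noncomputable def Vspace (m n j : ℕ) : Submodule ℂ (ℂ[X] × ℂ[X]) :=
  (Polynomial.degreeLE ℂ ((n - j : ℕ) : WithBot ℕ)).prod
    (Polynomial.degreeLE ℂ ((m - j : ℕ) : WithBot ℕ))

/-- The ℓ² inner product of the coefficient sequences of two polynomials. -/
noncomputable def pInner (f g : ℂ[X]) : ℂ :=
  ∑ i ∈ f.support ∪ g.support, (starRingEnd ℂ) (f.coeff i) * g.coeff i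

/-- The ℓ² inner product on pairs of polynomials. -/
noncomputable def pairInner (a b : ℂ[X] × ℂ[X]) : ℂ := pInner a.1 b.1 + pInner a.2 b.2

lemma pairNorm_nonneg (w v : ℂ[X]) : 0 ≤ pairNorm w v := Real.sqrt_nonneg _

noncomputable def coefE (D : ℕ) : ℂ[X] →ₗ[ℂ] EuclideanSpace ℂ (Fin D) where
  toFun f := WithLp.toLp 2 (fun i => f.coeff i)
  map_add' f g := by ext i; simp
  map_smul' c f := by ext i; simp

lemma pnormSq_eq_sum (f : ℂ[X]) {s : Finset ℕ} (hs : f.support ⊆ s) :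
    pnormSq f = ∑ i ∈ s, ‖f.coeff i‖ ^ 2 := by
  refine Finset.sum_subset hs ?_
  intro i _ hi
  simp [Polynomial.notMem_support_iff.mp hi]

lemma coefE_norm {D : ℕ} {f : ℂ[X]} (hf : f.natDegree < D) : ‖coefE D f‖ = pnorm f := by
  rw [EuclideanSpace.norm_eq, pnorm, pnormSq_eq_sum f (Polynomial.supp_subset_range hf)]
  congr 1
  rw [← Fin.sum_univ_eq_sum_range (fun i => ‖f.coeff i‖ ^ 2) D]
  rfl

lemma coefE_inner {D : ℕ} {f g : ℂ[X]} (hf : f.natDegree < D) (hg : g.natDegree < D) :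
    (inner ℂ (coefE D f) (coefE D g) : ℂ) = pInner f g := by
  rw [PiLp.inner_apply, pInner]
  have hsub : f.support ∪ g.support ⊆ Finset.range D :=
    Finset.union_subset (Polynomial.supp_subset_range hf) (Polynomial.supp_subset_range hg)
  rw [Finset.sum_subset hsub (by intro i _ hi; simp at hi; simp [hi.1])]
  rw [← Fin.sum_univ_eq_sum_range (fun i => (starRingEnd ℂ) (f.coeff i) * g.coeff i) D]
  exact Finset.sum_congr rfl fun i _ => by simp [coefE, RCLike.inner_apply, mul_comm]

noncomputable def toPolyE (D : ℕ) : EuclideanSpace ℂ (Fin D) →ₗ[ℂ] ℂ[X] where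
  toFun x := ∑ i : Fin D, Polynomial.C (x i) * X ^ (i : ℕ)
  map_add' x y := by
    simp only [PiLp.add_apply, map_add, add_mul]
    exact Finset.sum_add_distrib
  map_smul' c x := by
    simp only [PiLp.smul_apply, smul_eq_mul, map_mul, RingHom.id_apply, Finset.smul_sum]
    refine Finset.sum_congr rfl fun i _ => ?_
    rw [smul_eq_C_mul]; ring

lemma toPolyE_coefE {D : ℕ} {f : ℂ[X]} (hf : f.natDegree < D) : toPolyE D (coefE D f) = f := by
  have : toPolyE D (coefE D f) = ∑ i : Fin D, Polynomial.C (f.coeff i) * X ^ (i : ℕ) := rfl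
  rw [this, Fin.sum_univ_eq_sum_range (fun i => Polynomial.C (f.coeff i) * X ^ i) D]
  conv_rhs => rw [Polynomial.as_sum_range' f D hf]
  exact Finset.sum_congr rfl fun i _ => Polynomial.C_mul_X_pow_eq_monomial

lemma coefE_eq_zero {D : ℕ} {f : ℂ[X]} (hf : f.natDegree < D) (h : coefE D f = 0) : f = 0 := by
  rw [← toPolyE_coefE hf, h, map_zero]

lemma pnormSq_nonneg (f : ℂ[X]) : 0 ≤ pnormSq f :=
  Finset.sum_nonneg fun i _ => sq_nonneg _

lemma pnorm_nonneg (f : ℂ[X]) : 0 ≤ pnorm f := Real.sqrt_nonneg _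

lemma pnorm_sq (f : ℂ[X]) : pnorm f ^ 2 = pnormSq f := Real.sq_sqrt (pnormSq_nonneg f)

lemma pnorm_zero : pnorm 0 = 0 := by simp [pnorm, pnormSq]

lemma pnormSq_pos {f : ℂ[X]} (hf : f ≠ 0) : 0 < pnormSq f := by
  refine Finset.sum_pos (fun i hi => ?_) ?_
  · have h := Polynomial.mem_support_iff.mp hi
    have : 0 < ‖f.coeff i‖ := norm_pos_iff.mpr h
    positivity
  · exact Polynomial.nonempty_support_iff.mpr hf

lemma pnorm_add_le (f g : ℂ[X]) : pnorm (f + g) ≤ pnorm f + pnorm g := by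
  set D := max f.natDegree g.natDegree + 1 with hD
  have hf : f.natDegree < D := by simp [hD]
  have hg : g.natDegree < D := by simp [hD]
  have hfg : (f + g).natDegree < D :=
    lt_of_le_of_lt (Polynomial.natDegree_add_le f g) (by simp [hD])
  calc pnorm (f + g) = ‖coefE D (f + g)‖ := (coefE_norm hfg).symm
    _ = ‖coefE D f + coefE D g‖ := by rw [map_add]
    _ ≤ ‖coefE D f‖ + ‖coefE D g‖ := norm_add_le _ _
    _ = pnorm f + pnorm g := by rw [coefE_norm hf, coefE_norm hg]

lemma pnorm_smul (c : ℂ) (f : ℂ[X]) : pnorm (c • f) = ‖c‖ * pnorm f := by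
  set D := f.natDegree + 1 with hD
  have hf : f.natDegree < D := by omega
  have hcf : (c • f).natDegree < D :=
    lt_of_le_of_lt (Polynomial.natDegree_smul_le c f) (by omega)
  calc pnorm (c • f) = ‖coefE D (c • f)‖ := (coefE_norm hcf).symm
    _ = ‖c • coefE D f‖ := by rw [map_smul]
    _ = ‖c‖ * ‖coefE D f‖ := norm_smul c _
    _ = ‖c‖ * pnorm f := by rw [coefE_norm hf]

lemma pnorm_neg (f : ℂ[X]) : pnorm (-f) = pnorm f := by
  have : (-f) = (-1 : ℂ) • f := by simp
  rw [this, pnorm_smul]; simp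

lemma pnorm_sub_le (f g : ℂ[X]) : pnorm (f - g) ≤ pnorm f + pnorm g := by
  rw [sub_eq_add_neg]
  exact le_trans (pnorm_add_le f (-g)) (by rw [pnorm_neg])

lemma pnorm_sum_le {ι : Type*} (s : Finset ι) (F : ι → ℂ[X]) :
    pnorm (∑ i ∈ s, F i) ≤ ∑ i ∈ s, pnorm (F i) := by
  induction s using Finset.cons_induction with
  | empty => simp [pnorm_zero]
  | cons a s ha ih =>
    rw [Finset.sum_cons, Finset.sum_cons]
    exact le_trans (pnorm_add_le _ _) (by linarith)

lemma pnormSq_mul_X_pow (f : ℂ[X]) (i : ℕ) : pnormSq (f * X ^ i) = pnormSq f := by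
  have hsub : (f * X ^ i).support ⊆
      (Finset.range (f.natDegree + 1)).map ⟨fun j => j + i, add_left_injective i⟩ := by
    intro j hj
    have hc := Polynomial.mem_support_iff.mp hj
    rw [Polynomial.coeff_mul_X_pow'] at hc
    by_cases hij : i ≤ j
    · simp only [hij, if_true] at hc
      simp only [Finset.mem_map, Finset.mem_range, Function.Embedding.coeFn_mk]
      exact ⟨j - i, by have := Polynomial.le_natDegree_of_ne_zero hc; omega, by omega⟩
    · simp [hij] at hc
  rw [pnormSq_eq_sum _ hsub, Finset.sum_map]
  simp only [Function.Embedding.coeFn_mk, Polynomial.coeff_mul_X_pow]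
  exact (pnormSq_eq_sum f (Polynomial.supp_subset_range (by omega))).symm

lemma pnorm_mul_X_pow (f : ℂ[X]) (i : ℕ) : pnorm (f * X ^ i) = pnorm f := by
  rw [pnorm, pnormSq_mul_X_pow, pnorm]

lemma pnorm_mul_le (f g : ℂ[X]) (d : ℕ) (hg : g.natDegree ≤ d) :
    pnorm (f * g) ≤ Real.sqrt (d + 1 : ℕ) * (pnorm f * pnorm g) := by
  have hexp : f * g = ∑ i ∈ Finset.range (d + 1), g.coeff i • (f * X ^ i) := by
    conv_lhs => rw [Polynomial.as_sum_range' g (d + 1) (Nat.lt_succ_of_le hg), Finset.mul_sum]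
    refine Finset.sum_congr rfl fun i _ => ?_
    rw [← Polynomial.C_mul_X_pow_eq_monomial, smul_eq_C_mul]; ring
  have h1 : pnorm (f * g) ≤ ∑ i ∈ Finset.range (d + 1), ‖g.coeff i‖ * pnorm f := by
    rw [hexp]
    refine le_trans (pnorm_sum_le _ _) (Finset.sum_le_sum fun i _ => ?_)
    rw [pnorm_smul, pnorm_mul_X_pow]
  have h2 : ∑ i ∈ Finset.range (d + 1), ‖g.coeff i‖ ≤ Real.sqrt (d + 1 : ℕ) * pnorm g := by
    have hcs := sq_sum_le_card_mul_sum_sq (s := Finset.range (d + 1)) (f := fun i => ‖g.coeff i‖)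
    have hsum : ∑ i ∈ Finset.range (d + 1), ‖g.coeff i‖ ^ 2 = pnormSq g :=
      (pnormSq_eq_sum g (Polynomial.supp_subset_range (by omega))).symm
    rw [Finset.card_range, hsum] at hcs
    have hnn : (0:ℝ) ≤ ∑ i ∈ Finset.range (d + 1), ‖g.coeff i‖ :=
      Finset.sum_nonneg fun i _ => norm_nonneg _
    calc ∑ i ∈ Finset.range (d + 1), ‖g.coeff i‖
        = Real.sqrt ((∑ i ∈ Finset.range (d + 1), ‖g.coeff i‖) ^ 2) := (Real.sqrt_sq hnn).symm
      _ ≤ Real.sqrt ((d + 1 : ℕ) * pnormSq g) := Real.sqrt_le_sqrt (by exact_mod_cast hcs)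
      _ = Real.sqrt (d + 1 : ℕ) * pnorm g := by
          rw [Real.sqrt_mul (by positivity), pnorm]
  calc pnorm (f * g) ≤ ∑ i ∈ Finset.range (d + 1), ‖g.coeff i‖ * pnorm f := h1
    _ = (∑ i ∈ Finset.range (d + 1), ‖g.coeff i‖) * pnorm f := by rw [← Finset.sum_mul]
    _ ≤ (Real.sqrt (d + 1 : ℕ) * pnorm g) * pnorm f :=
        mul_le_mul_of_nonneg_right h2 (pnorm_nonneg f)
    _ = Real.sqrt (d + 1 : ℕ) * (pnorm f * pnorm g) := by ring

lemma pInner_self (f : ℂ[X]) : pInner f f = (pnormSq f : ℂ) := by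
  rw [pInner, pnormSq, Finset.union_self, Complex.ofReal_sum]
  refine Finset.sum_congr rfl fun i _ => ?_
  rw [mul_comm, Complex.mul_conj']
  norm_cast

lemma pInner_smul_right (c : ℂ) (f g : ℂ[X]) : pInner f (c • g) = c * pInner f g := by
  set D := max f.natDegree g.natDegree + 1 with hD
  have hf : f.natDegree < D := by simp [hD]
  have hg : g.natDegree < D := by simp [hD]
  have hcg : (c • g).natDegree < D := lt_of_le_of_lt (Polynomial.natDegree_smul_le c g) hg
  rw [← coefE_inner hf hcg, ← coefE_inner hf hg, map_smul, inner_smul_right]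

lemma pInner_smul_left (c : ℂ) (f g : ℂ[X]) :
    pInner (c • f) g = (starRingEnd ℂ) c * pInner f g := by
  set D := max f.natDegree g.natDegree + 1 with hD
  have hf : f.natDegree < D := by simp [hD]
  have hg : g.natDegree < D := by simp [hD]
  have hcf : (c • f).natDegree < D := lt_of_le_of_lt (Polynomial.natDegree_smul_le c f) hf
  rw [← coefE_inner hcf hg, ← coefE_inner hf hg, map_smul, inner_smul_left]

lemma pInner_sub_right (f g h : ℂ[X]) : pInner f (g - h) = pInner f g - pInner f h := by
  set D := max f.natDegree (max g.natDegree h.natDegree) + 1 with hD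
  have hf : f.natDegree < D := by simp [hD]
  have hg : g.natDegree < D := by simp [hD]
  have hh : h.natDegree < D := by simp [hD]
  have hgh : (g - h).natDegree < D :=
    lt_of_le_of_lt (Polynomial.natDegree_sub_le g h) (by simp [hD])
  rw [← coefE_inner hf hgh, ← coefE_inner hf hg, ← coefE_inner hf hh, map_sub, inner_sub_right]

lemma pInner_add_right (f g h : ℂ[X]) : pInner f (g + h) = pInner f g + pInner f h := by
  set D := max f.natDegree (max g.natDegree h.natDegree) + 1 with hD
  have hf : f.natDegree < D := by simp [hD]
  have hg : g.natDegree < D := by simp [hD]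
  have hh : h.natDegree < D := by simp [hD]
  have hgh : (g + h).natDegree < D :=
    lt_of_le_of_lt (Polynomial.natDegree_add_le g h) (by simp [hD])
  rw [← coefE_inner hf hgh, ← coefE_inner hf hg, ← coefE_inner hf hh, map_add, inner_add_right]

lemma pnormSq_neg (f : ℂ[X]) : pnormSq (-f) = pnormSq f := by
  rw [← pnorm_sq, ← pnorm_sq, pnorm_neg]

lemma pnormSq_smul (c : ℂ) (f : ℂ[X]) : pnormSq (c • f) = ‖c‖ ^ 2 * pnormSq f := by
  rw [← pnorm_sq, ← pnorm_sq, pnorm_smul, mul_pow]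

lemma pairNorm_eq_one_iff (w v : ℂ[X]) : pairNorm w v = 1 ↔ pnormSq w + pnormSq v = 1 := by
  rw [pairNorm]
  constructor
  · intro h
    have h2 : Real.sqrt (pnormSq w + pnormSq v) ^ 2 = 1 := by rw [h]; norm_num
    rwa [Real.sq_sqrt (add_nonneg (pnormSq_nonneg w) (pnormSq_nonneg v))] at h2
  · intro h; rw [h, Real.sqrt_one]

lemma pairNorm_smul (c : ℂ) (w v : ℂ[X]) :
    pairNorm (c • w) (c • v) = ‖c‖ * pairNorm w v := by
  rw [pairNorm, pairNorm, pnormSq_smul, pnormSq_smul, ← mul_add,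
    Real.sqrt_mul (by positivity), Real.sqrt_sq (norm_nonneg c)]

lemma pairNorm_pos {w v : ℂ[X]} (h : ¬(w = 0 ∧ v = 0)) : 0 < pairNorm w v := by
  rw [pairNorm, Real.sqrt_pos]
  rcases not_and_or.mp h with h1 | h1
  · exact add_pos_of_pos_of_nonneg (pnormSq_pos h1) (pnormSq_nonneg v)
  · exact add_pos_of_nonneg_of_pos (pnormSq_nonneg w) (pnormSq_pos h1)

lemma pairNorm_zero : pairNorm 0 0 = 0 := by simp [pairNorm, pnormSq]

lemma two_cs {a b c d : ℝ} (ha : 0 ≤ a) (hb : 0 ≤ b) (hc : 0 ≤ c) (hd : 0 ≤ d) :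
    a * c + b * d ≤ Real.sqrt (a ^ 2 + b ^ 2) * Real.sqrt (c ^ 2 + d ^ 2) := by
  have h1 : Real.sqrt (a ^ 2 + b ^ 2) ^ 2 = a ^ 2 + b ^ 2 := Real.sq_sqrt (by positivity)
  have h2 : Real.sqrt (c ^ 2 + d ^ 2) ^ 2 = c ^ 2 + d ^ 2 := Real.sq_sqrt (by positivity)
  have h3 : 0 ≤ Real.sqrt (a ^ 2 + b ^ 2) := Real.sqrt_nonneg _
  have h4 : 0 ≤ Real.sqrt (c ^ 2 + d ^ 2) := Real.sqrt_nonneg _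
  nlinarith [sq_nonneg (a * d - b * c), mul_nonneg h3 h4, sq_nonneg (a*c + b*d)]

lemma pert (f g w v : ℂ[X]) (dw dv M : ℕ) (hw : w.natDegree ≤ dw) (hv : v.natDegree ≤ dv)
    (h1 : dw + 1 ≤ M) (h2 : dv + 1 ≤ M) :
    pnorm (f * w - g * v) ≤
      Real.sqrt (M : ℕ) * (pairNorm f g * pairNorm w v) := by
  have hfw := pnorm_mul_le f w dw hw
  have hgv := pnorm_mul_le g v dv hv
  have hs1 : Real.sqrt ((dw + 1 : ℕ)) ≤ Real.sqrt (M : ℕ) :=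
    Real.sqrt_le_sqrt (by exact_mod_cast h1)
  have hs2 : Real.sqrt ((dv + 1 : ℕ)) ≤ Real.sqrt (M : ℕ) :=
    Real.sqrt_le_sqrt (by exact_mod_cast h2)
  have key : pnorm f * pnorm w + pnorm g * pnorm v ≤ pairNorm f g * pairNorm w v := by
    have := two_cs (pnorm_nonneg f) (pnorm_nonneg g) (pnorm_nonneg w) (pnorm_nonneg v)
    simpa [pairNorm, pnorm_sq] using this
  have hMs : (0:ℝ) ≤ Real.sqrt (M : ℕ) := Real.sqrt_nonneg _
  calc pnorm (f * w - g * v) ≤ pnorm (f * w) + pnorm (g * v) := pnorm_sub_le _ _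
    _ ≤ Real.sqrt (M : ℕ) * (pnorm f * pnorm w) + Real.sqrt (M : ℕ) * (pnorm g * pnorm v) := by
        refine add_le_add (le_trans hfw ?_) (le_trans hgv ?_)
        · exact mul_le_mul_of_nonneg_right hs1
            (mul_nonneg (pnorm_nonneg f) (pnorm_nonneg w))
        · exact mul_le_mul_of_nonneg_right hs2
            (mul_nonneg (pnorm_nonneg g) (pnorm_nonneg v))
    _ = Real.sqrt (M : ℕ) * (pnorm f * pnorm w + pnorm g * pnorm v) := by ring
    _ ≤ Real.sqrt (M : ℕ) * (pairNorm f g * pairNorm w v) :=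
        mul_le_mul_of_nonneg_left key hMs

lemma sylMap_apply (p q : ℂ[X]) (x : ℂ[X] × ℂ[X]) : sylMap p q x = p * x.1 - q * x.2 := rfl

lemma kernel_span (m n k : ℕ) (hkm : k ≤ m) (hkn : k ≤ n)
    (pt qt : ℂ[X]) (hpm : pt.degree = (m : WithBot ℕ)) (hqn : qt.degree = (n : WithBot ℕ))
    (hg : gcdDeg pt qt = k) :
    ∃ a b : ℂ[X], a ≠ 0 ∧ b ≠ 0 ∧ a.natDegree = m - k ∧ b.natDegree = n - k ∧
      pt * b - qt * a = 0 ∧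
      (Vspace m n k ⊓ LinearMap.ker (sylMap pt qt)) =
        Submodule.span ℂ {((b, a) : ℂ[X] × ℂ[X])} := by
  have hpt0 : pt ≠ 0 := fun h => by simp [h] at hpm
  have hqt0 : qt ≠ 0 := fun h => by simp [h] at hqn
  set u : ℂ[X] := GCDMonoid.gcd pt qt with hu_def
  have hu0 : u ≠ 0 := gcd_ne_zero_of_left hpt0
  set a : ℂ[X] := pt / u with ha_def
  set b : ℂ[X] := qt / u with hb_def
  have hua : u * a = pt := EuclideanDomain.mul_div_cancel' hu0 (gcd_dvd_left pt qt)
  have hub : u * b = qt := EuclideanDomain.mul_div_cancel' hu0 (gcd_dvd_right pt qt)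
  have ha0 : a ≠ 0 := left_div_gcd_ne_zero hpt0
  have hb0 : b ≠ 0 := right_div_gcd_ne_zero hqt0
  have hcop : IsCoprime a b := isCoprime_div_gcd_div_gcd hqt0
  -- natDegree of u is k
  have huk : u.natDegree = k := by
    have h1 : EuclideanDomain.gcd pt qt ∣ u :=
      dvd_gcd (EuclideanDomain.gcd_dvd_left pt qt) (EuclideanDomain.gcd_dvd_right pt qt)
    have h2 : u ∣ EuclideanDomain.gcd pt qt :=
      EuclideanDomain.dvd_gcd (gcd_dvd_left pt qt) (gcd_dvd_right pt qt)
    have : (EuclideanDomain.gcd pt qt).degree = u.degree :=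
      degree_eq_degree_of_associated (associated_of_dvd_dvd h1 h2)
    rw [← hg, gcdDeg]
    exact (natDegree_eq_of_degree_eq this).symm
  have hptm : pt.natDegree = m := natDegree_eq_of_degree_eq_some hpm
  have hqtn : qt.natDegree = n := natDegree_eq_of_degree_eq_some hqn
  have hadeg : a.natDegree = m - k := by
    have := natDegree_mul hu0 ha0
    rw [hua, hptm, huk] at this; omega
  have hbdeg : b.natDegree = n - k := by
    have := natDegree_mul hu0 hb0
    rw [hub, hqtn, huk] at this; omega
  have hsyl : pt * b - qt * a = 0 := by rw [← hua, ← hub]; ring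
  refine ⟨a, b, ha0, hb0, hadeg, hbdeg, hsyl, le_antisymm ?_ ?_⟩
  · rintro ⟨w, v⟩ ⟨hV, hker⟩
    have hker' : sylMap pt qt (w, v) = 0 := hker
    rw [sylMap_apply] at hker'
    simp only at hker'
    have heq : pt * w = qt * v := by linear_combination hker'
    rcases eq_or_ne w 0 with hw | hw
    · have hv : v = 0 := by
        rcases mul_eq_zero.mp (by rw [← heq, hw, mul_zero] : qt * v = 0) with h | h
        · exact absurd h hqt0
        · exact h
      rw [hw, hv]
      exact Submodule.zero_mem _
    · have heq2 : a * w = b * v := by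
        apply mul_left_cancel₀ hu0
        rw [← mul_assoc, ← mul_assoc, hua, hub]; exact heq
      have hdvd : b ∣ w := (hcop.symm).dvd_of_dvd_mul_left ⟨v, heq2⟩
      obtain ⟨t, ht⟩ := hdvd
      have ht0 : t ≠ 0 := fun h => hw (by rw [ht, h, mul_zero])
      have hveq : v = a * t := by
        apply mul_left_cancel₀ hb0
        rw [← heq2, ht]; ring
      have hwdeg : w.natDegree ≤ n - k := by
        have := (Polynomial.mem_degreeLE.mp hV.1)
        exact natDegree_le_iff_degree_le.mpr this
      have htdeg : t.natDegree = 0 := by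
        have := natDegree_mul hb0 ht0
        rw [← ht] at this
        omega
      obtain ⟨c, hc⟩ := natDegree_eq_zero.mp htdeg
      refine Submodule.mem_span_singleton.mpr ⟨c, ?_⟩
      have : c • ((b, a) : ℂ[X] × ℂ[X]) = (c • b, c • a) := rfl
      rw [this, Prod.mk.injEq]
      constructor
      · rw [ht, ← hc, smul_eq_C_mul, mul_comm]
      · rw [hveq, ← hc, smul_eq_C_mul, mul_comm]
  · rw [Submodule.span_le, Set.singleton_subset_iff]
    refine ⟨⟨?_, ?_⟩, ?_⟩
    · exact Polynomial.mem_degreeLE.mpr (by rw [← hbdeg]; exact degree_le_natDegree)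
    · exact Polynomial.mem_degreeLE.mpr (by rw [← hadeg]; exact degree_le_natDegree)
    · show sylMap pt qt (b, a) = 0
      rw [sylMap_apply]
      simpa using hsyl


set_option maxHeartbeats 1000000 in
set_option synthInstance.maxHeartbeats 200000 in
/-- A unit-norm minimizer y of ‖S_k(p,q)(·)‖ is within 2ε√(max(m,n)−k+1)/σ₂ of the
kernel K of S_k(p̃,q̃) (i.e., ‖y − P(y)‖ is small, P the orthogonal projection onto K). -/
theorem minimizer_near_kernel (m n k : ℕ) (hm : 1 ≤ m) (hn : 1 ≤ n)
    (hk1 : 1 ≤ k) (hk : k ≤ min m n)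
    (pt qt : ℂ[X]) (hpt : (pt, qt) ∈ Pmnk m n k)
    (ε : ℝ) (hε : 0 < ε)
    (p q : ℂ[X]) (hpq : (p, q) ∈ Cmn m n)
    (hclose : pairNorm (p - pt) (q - qt) < ε)
    (K : Submodule ℂ (ℂ[X] × ℂ[X]))
    (hK : K = Vspace m n k ⊓ LinearMap.ker (sylMap pt qt))
    (σ₂ : ℝ)
    (hσ₂ : σ₂ = sInf {r : ℝ | ∃ x : ℂ[X] × ℂ[X], x ∈ Vspace m n k ∧
        pairNorm x.1 x.2 = 1 ∧ (∀ z ∈ K, pairInner z x = 0) ∧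
        r = pnorm (pt * x.1 - qt * x.2)}) :
    0 < σ₂ ∧
    ∀ y : ℂ[X] × ℂ[X], y ∈ Vspace m n k → pairNorm y.1 y.2 = 1 →
      (∀ y' : ℂ[X] × ℂ[X], y' ∈ Vspace m n k → pairNorm y'.1 y'.2 = 1 →
        pnorm (p * y.1 - q * y.2) ≤ pnorm (p * y'.1 - q * y'.2)) →
      ∃ z ∈ K, pairNorm (y.1 - z.1) (y.2 - z.2) <
        2 * ε * Real.sqrt ((max m n - k + 1 : ℕ)) / σ₂ := by
  obtain ⟨⟨hpm, hqn⟩, hgd⟩ := hpt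
  have hkm : k ≤ m := le_trans hk (min_le_left m n)
  have hkn : k ≤ n := le_trans hk (min_le_right m n)
  obtain ⟨a, b, ha0, hb0, hadeg, hbdeg, hsab, hspan⟩ :=
    kernel_span m n k hkm hkn pt qt hpm hqn hgd
  set e : ℂ[X] × ℂ[X] := (b, a) with he_def
  have hKspan : K = Submodule.span ℂ {e} := hK.trans hspan
  have heK : e ∈ K := by rw [hKspan]; exact Submodule.mem_span_singleton_self e
  have heInf : e ∈ Vspace m n k ⊓ LinearMap.ker (sylMap pt qt) := hK ▸ heK
  have heV : e ∈ Vspace m n k := heInf.1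
  have hptm : pt.natDegree = m := natDegree_eq_of_degree_eq_some hpm
  have hqtn : qt.natDegree = n := natDegree_eq_of_degree_eq_some hqn
  set D := m + n + 1 with hD
  have hVdeg : ∀ z : ℂ[X] × ℂ[X], z ∈ Vspace m n k →
      z.1.natDegree ≤ n - k ∧ z.2.natDegree ≤ m - k := by
    intro z hz
    obtain ⟨h1, h2⟩ := Submodule.mem_prod.mp hz
    exact ⟨natDegree_le_iff_degree_le.mpr (Polynomial.mem_degreeLE.mp h1),
      natDegree_le_iff_degree_le.mpr (Polynomial.mem_degreeLE.mp h2)⟩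
  have hVdegD : ∀ z : ℂ[X] × ℂ[X], z ∈ Vspace m n k →
      z.1.natDegree < D ∧ z.2.natDegree < D := by
    intro z hz
    obtain ⟨h1, h2⟩ := hVdeg z hz
    constructor <;> omega
  -- linearity of x ↦ pairInner e x
  have hlin_sub : ∀ x y : ℂ[X] × ℂ[X], pairInner e (x - y) = pairInner e x - pairInner e y := by
    intro x y
    show pInner b (x.1 - y.1) + pInner a (x.2 - y.2) = _
    rw [pInner_sub_right, pInner_sub_right]
    show _ = (pInner b x.1 + pInner a x.2) - (pInner b y.1 + pInner a y.2)
    ring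
  have hlin_add : ∀ x y : ℂ[X] × ℂ[X], pairInner e (x + y) = pairInner e x + pairInner e y := by
    intro x y
    show pInner b (x.1 + y.1) + pInner a (x.2 + y.2) = _
    rw [pInner_add_right, pInner_add_right]
    show _ = (pInner b x.1 + pInner a x.2) + (pInner b y.1 + pInner a y.2)
    ring
  have hlin_smul : ∀ (c : ℂ) (x : ℂ[X] × ℂ[X]), pairInner e (c • x) = c * pairInner e x := by
    intro c x
    show pInner b (c • x.1) + pInner a (c • x.2) = _
    rw [pInner_smul_right, pInner_smul_right]
    show _ = c * (pInner b x.1 + pInner a x.2)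
    ring
  have hNe_pos : (0:ℝ) < pnormSq b + pnormSq a :=
    add_pos (pnormSq_pos hb0) (pnormSq_pos ha0)
  have hee : pairInner e e = ((pnormSq b + pnormSq a : ℝ) : ℂ) := by
    show pInner b b + pInner a a = _
    rw [pInner_self, pInner_self]; push_cast; ring
  have horth : ∀ x : ℂ[X] × ℂ[X], pairInner e x = 0 → ∀ z ∈ K, pairInner z x = 0 := by
    intro x hx z hz
    rw [hKspan] at hz
    obtain ⟨c, rfl⟩ := Submodule.mem_span_singleton.mp hz
    show pInner (c • b) x.1 + pInner (c • a) x.2 = 0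
    rw [pInner_smul_left, pInner_smul_left, ← mul_add]
    have hx' : pInner b x.1 + pInner a x.2 = 0 := hx
    rw [hx', mul_zero]
  -- element of the sigma set
  have hmem : ∀ x : ℂ[X] × ℂ[X], x ∈ Vspace m n k → pairNorm x.1 x.2 = 1 →
      pairInner e x = 0 →
      pnorm (pt * x.1 - qt * x.2) ∈ {r : ℝ | ∃ x : ℂ[X] × ℂ[X], x ∈ Vspace m n k ∧
        pairNorm x.1 x.2 = 1 ∧ (∀ z ∈ K, pairInner z x = 0) ∧
        r = pnorm (pt * x.1 - qt * x.2)} :=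
    fun x h1 h2 h3 => ⟨x, h1, h2, horth x h3, rfl⟩
  have hbdd : BddBelow {r : ℝ | ∃ x : ℂ[X] × ℂ[X], x ∈ Vspace m n k ∧
      pairNorm x.1 x.2 = 1 ∧ (∀ z ∈ K, pairInner z x = 0) ∧
      r = pnorm (pt * x.1 - qt * x.2)} := by
    refine ⟨0, ?_⟩
    rintro r ⟨x, -, -, -, rfl⟩
    exact pnorm_nonneg _
  have claimA : ∀ x : ℂ[X] × ℂ[X], x ∈ Vspace m n k → pairNorm x.1 x.2 = 1 →
      pairInner e x = 0 → σ₂ ≤ pnorm (pt * x.1 - qt * x.2) := by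
    intro x h1 h2 h3
    rw [hσ₂]
    exact csInf_le hbdd (hmem x h1 h2 h3)
  -- construct a nonzero element of V orthogonal to e
  have hx₀ : ∃ x₀ : ℂ[X] × ℂ[X], x₀ ∈ Vspace m n k ∧ ¬(x₀.1 = 0 ∧ x₀.2 = 0) ∧
      pairInner e x₀ = 0 := by
    have hg1V : ((1:ℂ[X]), (0:ℂ[X])) ∈ Vspace m n k := by
      refine Submodule.mem_prod.mpr ⟨Polynomial.mem_degreeLE.mpr ?_,
        Polynomial.mem_degreeLE.mpr ?_⟩
      · rw [Polynomial.degree_one]; exact_mod_cast Nat.zero_le _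
      · rw [Polynomial.degree_zero]; exact bot_le
    have hg2V : ((0:ℂ[X]), (1:ℂ[X])) ∈ Vspace m n k := by
      refine Submodule.mem_prod.mpr ⟨Polynomial.mem_degreeLE.mpr ?_,
        Polynomial.mem_degreeLE.mpr ?_⟩
      · rw [Polynomial.degree_zero]; exact bot_le
      · rw [Polynomial.degree_one]; exact_mod_cast Nat.zero_le _
    set α := pairInner e ((0:ℂ[X]), (1:ℂ[X])) with hα
    set β := pairInner e ((1:ℂ[X]), (0:ℂ[X])) with hβ
    by_cases h0 : α = 0 ∧ β = 0
    · exact ⟨((1:ℂ[X]), (0:ℂ[X])), hg1V, by simp, h0.2⟩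
    · refine ⟨α • ((1:ℂ[X]), (0:ℂ[X])) - β • ((0:ℂ[X]), (1:ℂ[X])),
        Submodule.sub_mem _ (Submodule.smul_mem _ _ hg1V) (Submodule.smul_mem _ _ hg2V),
        ?_, ?_⟩
      · intro ⟨h1, h2⟩
        simp only [Prod.smul_fst, Prod.smul_snd, Prod.fst_sub, Prod.snd_sub,
          smul_zero, sub_zero, zero_sub, neg_eq_zero, smul_eq_zero] at h1 h2
        rcases h1 with h1 | h1
        · rcases h2 with h2 | h2
          · exact h0 ⟨h1, h2⟩
          · exact one_ne_zero h2
        · exact one_ne_zero h1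
      · rw [hlin_sub, hlin_smul, hlin_smul, ← hα, ← hβ]; ring
  obtain ⟨x₀, hx₀V, hx₀ne, hx₀orth⟩ := hx₀
  have ht₀ : 0 < pairNorm x₀.1 x₀.2 := pairNorm_pos hx₀ne
  set x₁ : ℂ[X] × ℂ[X] := ((pairNorm x₀.1 x₀.2 : ℝ) : ℂ)⁻¹ • x₀ with hx₁
  have hx₁V : x₁ ∈ Vspace m n k := Submodule.smul_mem _ _ hx₀V
  have hx₁norm : pairNorm x₁.1 x₁.2 = 1 := by
    have h1 : x₁.1 = ((pairNorm x₀.1 x₀.2 : ℝ) : ℂ)⁻¹ • x₀.1 := rfl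
    have h2 : x₁.2 = ((pairNorm x₀.1 x₀.2 : ℝ) : ℂ)⁻¹ • x₀.2 := rfl
    rw [h1, h2, pairNorm_smul, norm_inv, Complex.norm_real, Real.norm_eq_abs,
      abs_of_pos ht₀, inv_mul_cancel₀ (ne_of_gt ht₀)]
  have hx₁orth : pairInner e x₁ = 0 := by rw [hx₁, hlin_smul, hx₀orth, mul_zero]
  have hσpos : 0 < σ₂ := by
  -- Euclidean transport
    set Φ : ℂ[X] × ℂ[X] →ₗ[ℂ] (EuclideanSpace ℂ (Fin D)) × (EuclideanSpace ℂ (Fin D)) := (coefE D).prodMap (coefE D) with hΦ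
    set Ψ : (EuclideanSpace ℂ (Fin D)) × (EuclideanSpace ℂ (Fin D)) →ₗ[ℂ] ℂ[X] × ℂ[X] := (toPolyE D).prodMap (toPolyE D) with hΨ
    set T : (EuclideanSpace ℂ (Fin D)) × (EuclideanSpace ℂ (Fin D)) →ₗ[ℂ] EuclideanSpace ℂ (Fin D) := (coefE D).comp ((sylMap pt qt).comp Ψ) with hT
    have lin_e : ∃ L0 : (ℂ[X] × ℂ[X]) →ₗ[ℂ] ℂ, ∀ x, L0 x = pairInner e x := by
      refine ⟨{ toFun := fun x => pairInner e x, map_add' := hlin_add, map_smul' := ?_ },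
        fun x => rfl⟩
      intro c x; simpa using hlin_smul c x
    obtain ⟨L0, hL0⟩ := lin_e
    set L : (EuclideanSpace ℂ (Fin D)) × (EuclideanSpace ℂ (Fin D)) →ₗ[ℂ] ℂ := L0.comp Ψ with hL
    set V' : Submodule ℂ ((EuclideanSpace ℂ (Fin D)) × (EuclideanSpace ℂ (Fin D))) := (Vspace m n k).map Φ with hV'
    set C : Set ((EuclideanSpace ℂ (Fin D)) × (EuclideanSpace ℂ (Fin D))) := {x | x ∈ V' ∧ ‖x.1‖ ^ 2 + ‖x.2‖ ^ 2 = 1 ∧ L x = 0} with hCdef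
    have hΨΦ : ∀ z : ℂ[X] × ℂ[X], z ∈ Vspace m n k → Ψ (Φ z) = z := by
      intro z hz
      obtain ⟨h1, h2⟩ := hVdegD z hz
      have h3 : Ψ (Φ z) = (toPolyE D (coefE D z.1), toPolyE D (coefE D z.2)) := rfl
      rw [h3, toPolyE_coefE h1, toPolyE_coefE h2]
    have hnormΦ : ∀ z : ℂ[X] × ℂ[X], z ∈ Vspace m n k →
        ‖(Φ z).1‖ = pnorm z.1 ∧ ‖(Φ z).2‖ = pnorm z.2 := by
      intro z hz
      obtain ⟨h1, h2⟩ := hVdegD z hz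
      exact ⟨coefE_norm h1, coefE_norm h2⟩
    have hdeg_syl : ∀ z : ℂ[X] × ℂ[X], z ∈ Vspace m n k →
        (pt * z.1 - qt * z.2).natDegree < D := by
      intro z hz
      obtain ⟨h1, h2⟩ := hVdeg z hz
      have h3 := Polynomial.natDegree_sub_le (pt * z.1) (qt * z.2)
      have h4 := Polynomial.natDegree_mul_le (p := pt) (q := z.1)
      have h5 := Polynomial.natDegree_mul_le (p := qt) (q := z.2)
      rw [hptm] at h4; rw [hqtn] at h5
      omega
    have hTΦ : ∀ z : ℂ[X] × ℂ[X], z ∈ Vspace m n k →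
        ‖T (Φ z)‖ = pnorm (pt * z.1 - qt * z.2) := by
      intro z hz
      have h1 : T (Φ z) = coefE D (sylMap pt qt (Ψ (Φ z))) := rfl
      rw [h1, hΨΦ z hz, sylMap_apply]
      exact coefE_norm (hdeg_syl z hz)
    have hLΦ : ∀ z : ℂ[X] × ℂ[X], z ∈ Vspace m n k → L (Φ z) = pairInner e z := by
      intro z hz
      have h1 : L (Φ z) = L0 (Ψ (Φ z)) := rfl
      rw [h1, hΨΦ z hz, hL0]
    have hmemC : ∀ z : ℂ[X] × ℂ[X], z ∈ Vspace m n k → pairNorm z.1 z.2 = 1 →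
        pairInner e z = 0 → Φ z ∈ C := by
      intro z h1 h2 h3
      obtain ⟨hn1, hn2⟩ := hnormΦ z h1
      refine ⟨Submodule.mem_map_of_mem h1, ?_, by rw [hLΦ z h1]; exact h3⟩
      rw [hn1, hn2, pnorm_sq, pnorm_sq]
      exact (pairNorm_eq_one_iff z.1 z.2).mp h2
    have hCpre : ∀ x ∈ C, ∃ z, z ∈ Vspace m n k ∧ Φ z = x ∧ pairNorm z.1 z.2 = 1 ∧
        pairInner e z = 0 := by
      rintro x ⟨⟨z, hzV, rfl⟩, hn1, hL1⟩
      obtain ⟨hh1, hh2⟩ := hnormΦ z hzV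
      refine ⟨z, hzV, rfl, ?_, by rw [← hLΦ z hzV]; exact hL1⟩
      rw [pairNorm_eq_one_iff, ← pnorm_sq, ← pnorm_sq, ← hh1, ← hh2]
      exact hn1
    have hC_closed : IsClosed C := by
      have h1 : IsClosed (V' : Set ((EuclideanSpace ℂ (Fin D)) × (EuclideanSpace ℂ (Fin D)))) := Submodule.closed_of_finiteDimensional V'
      have h2 : IsClosed {x : (EuclideanSpace ℂ (Fin D)) × (EuclideanSpace ℂ (Fin D)) | ‖x.1‖ ^ 2 + ‖x.2‖ ^ 2 = 1} :=
        isClosed_eq (by fun_prop) continuous_const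
      have h3 : IsClosed {x : (EuclideanSpace ℂ (Fin D)) × (EuclideanSpace ℂ (Fin D)) | L x = 0} :=
        isClosed_eq L.continuous_of_finiteDimensional continuous_const
      have h4 : C = (V' : Set ((EuclideanSpace ℂ (Fin D)) × (EuclideanSpace ℂ (Fin D)))) ∩ ({x : (EuclideanSpace ℂ (Fin D)) × (EuclideanSpace ℂ (Fin D)) | ‖x.1‖ ^ 2 + ‖x.2‖ ^ 2 = 1} ∩
          {x : (EuclideanSpace ℂ (Fin D)) × (EuclideanSpace ℂ (Fin D)) | L x = 0}) := by
        ext x; simp [hCdef, Set.mem_setOf_eq, and_assoc]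
      rw [h4]
      exact h1.inter (h2.inter h3)
    have hCsub : C ⊆ Metric.closedBall 0 1 := by
      intro x hx
      rw [Metric.mem_closedBall, dist_zero_right]
      have h1 := hx.2.1
      have hle1 : ‖x.1‖ ≤ 1 := by nlinarith [norm_nonneg x.1, norm_nonneg x.2, sq_nonneg ‖x.2‖]
      have hle2 : ‖x.2‖ ≤ 1 := by nlinarith [norm_nonneg x.1, norm_nonneg x.2, sq_nonneg ‖x.1‖]
      rw [Prod.norm_def]
      exact max_le hle1 hle2
    have hCcomp : IsCompact C :=
      (isCompact_closedBall (0 : (EuclideanSpace ℂ (Fin D)) × (EuclideanSpace ℂ (Fin D))) 1).of_isClosed_subset hC_closed hCsub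
    have hCne : C.Nonempty := ⟨Φ x₁, hmemC x₁ hx₁V hx₁norm hx₁orth⟩
    obtain ⟨x₀', hx₀'C, hminC⟩ := hCcomp.exists_isMinOn hCne
      (Continuous.continuousOn T.continuous_of_finiteDimensional.norm)
    obtain ⟨z₀, hz₀V, hz₀Φ, hz₀n, hz₀o⟩ := hCpre x₀' hx₀'C
    have hμpos : 0 < ‖T x₀'‖ := by
      rcases (norm_nonneg (T x₀')).lt_or_eq with h | h
      · exact h
      · exfalso
        have hTz : pnorm (pt * z₀.1 - qt * z₀.2) = 0 := by
          rw [← hTΦ z₀ hz₀V, hz₀Φ, ← h]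
        have hsyl0 : pt * z₀.1 - qt * z₀.2 = 0 := by
          by_contra hne
          have h2 : (0:ℝ) < pnorm (pt * z₀.1 - qt * z₀.2) :=
            Real.sqrt_pos.mpr (pnormSq_pos hne)
          linarith
        have hz₀K : z₀ ∈ K := by
          rw [hK]
          exact ⟨hz₀V, by show sylMap pt qt z₀ = 0; rw [sylMap_apply]; exact hsyl0⟩
        rw [hKspan] at hz₀K
        obtain ⟨c, rfl⟩ := Submodule.mem_span_singleton.mp hz₀K
        rw [hlin_smul, hee] at hz₀o
        rcases mul_eq_zero.mp hz₀o with hc | hc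
        · rw [hc, zero_smul] at hz₀n
          have : pairNorm (0 : ℂ[X] × ℂ[X]).1 (0 : ℂ[X] × ℂ[X]).2 = 0 := pairNorm_zero
          rw [this] at hz₀n
          exact one_ne_zero hz₀n.symm
        · exact (Complex.ofReal_ne_zero.mpr (ne_of_gt hNe_pos)) hc
    rw [hσ₂]
    refine lt_of_lt_of_le hμpos (le_csInf ⟨_, hmem x₁ hx₁V hx₁norm hx₁orth⟩ ?_)
    rintro r ⟨x, hxV, hxn, hxorth, rfl⟩
    have hxe : pairInner e x = 0 := hxorth e heK
    have hxC : Φ x ∈ C := hmemC x hxV hxn hxe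
    calc ‖T x₀'‖ ≤ ‖T (Φ x)‖ := isMinOn_iff.mp hminC _ hxC
      _ = pnorm (pt * x.1 - qt * x.2) := hTΦ x hxV
  refine ⟨hσpos, ?_⟩
  intro y hyV hyn hymin
  -- Part E : the estimate
  set M := max m n - k + 1 with hM
  have hMpos : (0:ℝ) < Real.sqrt (M:ℕ) := Real.sqrt_pos.mpr (by exact_mod_cast Nat.succ_pos (max m n - k))
  have hMn : n - k + 1 ≤ M := by omega
  have hMm : m - k + 1 ≤ M := by omega
  set ε' := pairNorm (p - pt) (q - qt) with hε'
  have hε'0 : 0 ≤ ε' := pairNorm_nonneg _ _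
  have hpertgen : ∀ z : ℂ[X] × ℂ[X], z ∈ Vspace m n k →
      pnorm ((p - pt) * z.1 - (q - qt) * z.2) ≤
        Real.sqrt (M:ℕ) * (ε' * pairNorm z.1 z.2) := by
    intro z hz
    obtain ⟨h1, h2⟩ := hVdeg z hz
    exact pert (p - pt) (q - qt) z.1 z.2 (n - k) (m - k) M h1 h2 hMn hMm
  set te := pairNorm b a with hte
  have hte_pos : 0 < te := pairNorm_pos (fun h => hb0 h.1)
  set e₁ : ℂ[X] × ℂ[X] := ((te : ℝ) : ℂ)⁻¹ • e with he₁
  have he₁V : e₁ ∈ Vspace m n k := Submodule.smul_mem _ _ heV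
  have he₁1 : e₁.1 = ((te : ℝ) : ℂ)⁻¹ • b := rfl
  have he₁2 : e₁.2 = ((te : ℝ) : ℂ)⁻¹ • a := rfl
  have he₁n : pairNorm e₁.1 e₁.2 = 1 := by
    rw [he₁1, he₁2, pairNorm_smul, norm_inv, Complex.norm_real, Real.norm_eq_abs,
      abs_of_pos hte_pos]
    exact inv_mul_cancel₀ (ne_of_gt hte_pos)
  have hpe : pnorm ((p - pt) * b - (q - qt) * a) ≤ Real.sqrt (M:ℕ) * (ε' * te) := by
    have h := hpertgen e heV
    simpa [he_def, hte] using h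
  have hkey : p * b - q * a = (p - pt) * b - (q - qt) * a := by linear_combination hsab
  have hSe₁ : p * e₁.1 - q * e₁.2 = ((te : ℝ) : ℂ)⁻¹ • ((p - pt) * b - (q - qt) * a) := by
    rw [he₁1, he₁2, mul_smul_comm, mul_smul_comm, ← smul_sub, hkey]
  have hSe₁bound : pnorm (p * e₁.1 - q * e₁.2) ≤ Real.sqrt (M:ℕ) * ε' := by
    rw [hSe₁, pnorm_smul, norm_inv, Complex.norm_real, Real.norm_eq_abs, abs_of_pos hte_pos]
    calc te⁻¹ * pnorm ((p - pt) * b - (q - qt) * a)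
        ≤ te⁻¹ * (Real.sqrt (M:ℕ) * (ε' * te)) :=
          mul_le_mul_of_nonneg_left hpe (by positivity)
      _ = Real.sqrt (M:ℕ) * ε' := by field_simp
  have hymin1 : pnorm (p * y.1 - q * y.2) ≤ Real.sqrt (M:ℕ) * ε' :=
    le_trans (hymin e₁ he₁V he₁n) hSe₁bound
  have htri : pnorm (pt * y.1 - qt * y.2) ≤
      pnorm (p * y.1 - q * y.2) + pnorm ((p - pt) * y.1 - (q - qt) * y.2) := by
    have hid : pt * y.1 - qt * y.2 =
        (p * y.1 - q * y.2) - ((p - pt) * y.1 - (q - qt) * y.2) := by ring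
    rw [hid]
    exact pnorm_sub_le _ _
  have hy2 : pnorm ((p - pt) * y.1 - (q - qt) * y.2) ≤ Real.sqrt (M:ℕ) * ε' := by
    have h2 := hpertgen y hyV
    rw [hyn, mul_one] at h2
    exact h2
  have hymin2 : pnorm (pt * y.1 - qt * y.2) ≤ 2 * (Real.sqrt (M:ℕ) * ε') := by linarith
  -- the orthogonal projection of y onto K
  set cc : ℂ := (pInner b y.1 + pInner a y.2) / ((pnormSq b + pnormSq a : ℝ) : ℂ) with hcc
  set z : ℂ[X] × ℂ[X] := cc • e with hzdef
  have hzK : z ∈ K := Submodule.smul_mem _ _ heK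
  refine ⟨z, hzK, ?_⟩
  have hz1 : z.1 = cc • b := rfl
  have hz2 : z.2 = cc • a := rfl
  have hzV : z ∈ Vspace m n k := Submodule.smul_mem _ _ heV
  set d : ℂ[X] × ℂ[X] := y - z with hddef
  have hd1 : d.1 = y.1 - z.1 := rfl
  have hd2 : d.2 = y.2 - z.2 := rfl
  rw [← hd1, ← hd2]
  have hdV : d ∈ Vspace m n k := Submodule.sub_mem _ hyV hzV
  have hNe0 : ((pnormSq b + pnormSq a : ℝ) : ℂ) ≠ 0 :=
    Complex.ofReal_ne_zero.mpr (ne_of_gt hNe_pos)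
  have hdorth : pairInner e d = 0 := by
    show pInner b d.1 + pInner a d.2 = 0
    rw [hd1, hd2, hz1, hz2, pInner_sub_right, pInner_sub_right, pInner_smul_right,
      pInner_smul_right, pInner_self, pInner_self, hcc]
    have hNe0' : ((pnormSq b : ℂ) + (pnormSq a : ℂ)) ≠ 0 := by
      push_cast at hNe0; exact hNe0
    have hinv : ((pnormSq b : ℂ) + (pnormSq a : ℂ)) * ((pnormSq b : ℂ) + (pnormSq a : ℂ))⁻¹
        = 1 := mul_inv_cancel₀ hNe0'
    push_cast
    field_simp
    ring
  have hSd : pt * d.1 - qt * d.2 = pt * y.1 - qt * y.2 := by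
    have hz1' : z.1 = Polynomial.C cc * b := by rw [hz1, smul_eq_C_mul]
    have hz2' : z.2 = Polynomial.C cc * a := by rw [hz2, smul_eq_C_mul]
    rw [hd1, hd2, hz1', hz2']
    linear_combination (-(Polynomial.C cc)) * hsab
  by_cases hd0 : d.1 = 0 ∧ d.2 = 0
  · rw [hd0.1, hd0.2, pairNorm_zero]
    have hnum : 0 < 2 * ε * Real.sqrt (M:ℕ) := by positivity
    exact div_pos hnum hσpos
  · have htd : 0 < pairNorm d.1 d.2 := pairNorm_pos hd0
    set td := pairNorm d.1 d.2 with htddef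
    set x₂ : ℂ[X] × ℂ[X] := ((td : ℝ) : ℂ)⁻¹ • d with hx₂
    have hx₂V : x₂ ∈ Vspace m n k := Submodule.smul_mem _ _ hdV
    have hx₂1 : x₂.1 = ((td : ℝ) : ℂ)⁻¹ • d.1 := rfl
    have hx₂2 : x₂.2 = ((td : ℝ) : ℂ)⁻¹ • d.2 := rfl
    have hx₂n : pairNorm x₂.1 x₂.2 = 1 := by
      rw [hx₂1, hx₂2, pairNorm_smul, norm_inv, Complex.norm_real, Real.norm_eq_abs,
        abs_of_pos htd]
      exact inv_mul_cancel₀ (ne_of_gt htd)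
    have hx₂o : pairInner e x₂ = 0 := by rw [hx₂, hlin_smul, hdorth, mul_zero]
    have hA := claimA x₂ hx₂V hx₂n hx₂o
    have hsx₂ : pt * x₂.1 - qt * x₂.2 = ((td : ℝ) : ℂ)⁻¹ • (pt * y.1 - qt * y.2) := by
      rw [hx₂1, hx₂2, mul_smul_comm, mul_smul_comm, ← smul_sub, hSd]
    rw [hsx₂, pnorm_smul, norm_inv, Complex.norm_real, Real.norm_eq_abs, abs_of_pos htd] at hA
    have hfin : σ₂ * td ≤ 2 * (Real.sqrt (M:ℕ) * ε') := by
      have h5 : σ₂ * td ≤ td⁻¹ * pnorm (pt * y.1 - qt * y.2) * td :=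
        mul_le_mul_of_nonneg_right hA (le_of_lt htd)
      have h6 : td⁻¹ * pnorm (pt * y.1 - qt * y.2) * td = pnorm (pt * y.1 - qt * y.2) := by
        field_simp
      rw [h6] at h5
      linarith
    rw [lt_div_iff₀ hσpos]
    have h7 : ε' < ε := hclose
    nlinarith [hMpos, hσpos, htd]
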